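/- arXiv:2210.00570 — 2 statements merged into one kernel-verified Lean document; each statement's English description precedes it below -/
import Mathlib

section
/- Let L', M', N', P', s, t be real numbers with L' > 0, M' > 0, P' > 0, N' > P', and sin(s − t) ≠ 0, and define γ₁(x) = (L' + M'·cos(s + x)) / (N' + P'·cos(t + x)). If the derivative of γ₁ at a real point x equals zero, then sin(t + x) ≠ 0 and γ₁(x) = L'/N' − M'·sin(s − t)/(N'·sin(t + x)). -/
/-!
At a critical point the quotient rule gives `M' sin(s + x) · g = P' sin(t + x) · f`, where `f` and
`g > 0` are the numerator and denominator of `γ₁`. If `sin(t + x) = 0` this forces `sin(s + x) = 0`,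
hence `sin(s - t) = 0`. Otherwise, expanding `sin(s - t) = sin(s + x - (t + x))`, the claimed
closed form differs from `f / g` by `cos(t + x)` times the critical-point equation.
-/

open Real

theorem HasDerivAt.mul_eq_mul_of_deriv_div_eq_zero {𝕜 : Type*} [NontriviallyNormedField 𝕜]
    {f g : 𝕜 → 𝕜} {f' g' x : 𝕜} (hf : HasDerivAt f f' x) (hg : HasDerivAt g g' x)
    (hgx : g x ≠ 0) (h : _root_.deriv (fun y => f y / g y) x = 0) : f' * g x = f x * g' := by
  have hd : HasDerivAt (fun y => f y / g y) _ x := hf.div hg hgx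
  rw [hd.deriv, div_eq_zero_iff, sub_eq_zero] at h
  exact h.resolve_right (pow_ne_zero 2 hgx)

theorem hasDerivAt_const_add_mul_cos (a b c x : ℝ) :
    HasDerivAt (fun y => a + b * cos (c + y)) (-(b * sin (c + x))) x := by
  simpa using (((hasDerivAt_id x).const_add c).cos.const_mul b).const_add a

theorem add_mul_cos_pos {N P : ℝ} (h : |P| < N) (y : ℝ) : 0 < N + P * cos y := by
  have : -(P * cos y) ≤ |P| := by
    calc -(P * cos y) ≤ |P * cos y| := neg_le_abs _
      _ ≤ |P| := by rw [abs_mul]; exact mul_le_of_le_one_right (abs_nonneg P) (abs_cos_le_one y)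
  linarith

section CriticalPoint

variable {L M N P u v : ℝ}
  (hcrit : -(M * sin u) * (N + P * cos v) = (L + M * cos u) * -(P * sin v))
include hcrit

theorem sin_ne_zero_of_critical (hM : M ≠ 0) (hg : N + P * cos v ≠ 0) (huv : sin (u - v) ≠ 0) :
    sin v ≠ 0 := by
  intro hv
  have hu : sin u = 0 := by
    rw [hv, mul_zero, neg_zero, mul_zero, neg_mul, neg_eq_zero] at hcrit
    simpa [hM, hg] using hcrit
  exact huv (by rw [sin_sub, hu, hv]; ring)

theorem div_eq_of_critical (hv : sin v ≠ 0) (hN : N ≠ 0) (hg : N + P * cos v ≠ 0) :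
    (L + M * cos u) / (N + P * cos v) = L / N - M * sin (u - v) / (N * sin v) := by
  rw [div_sub_div _ _ hN (mul_ne_zero hN hv), div_eq_div_iff hg (mul_ne_zero hN (mul_ne_zero hN hv)),
    sin_sub]
  linear_combination (-(N * cos v)) * hcrit

end CriticalPoint

theorem stmt_3_general (L' M' N' P' s t : ℝ) (hM : M' > 0) (hP : P' > 0)
    (hNP : N' > P') (hst : Real.sin (s - t) ≠ 0)
    (γ₁ : ℝ → ℝ)
    (hγ : γ₁ = fun x => (L' + M' * Real.cos (s + x)) / (N' + P' * Real.cos (t + x)))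
    (x : ℝ) (hx : deriv γ₁ x = 0) :
    Real.sin (t + x) ≠ 0 ∧
      γ₁ x = L' / N' - M' * Real.sin (s - t) / (N' * Real.sin (t + x)) := by
  subst hγ
  have hg : N' + P' * cos (t + x) ≠ 0 := (add_mul_cos_pos (by rwa [abs_of_pos hP]) _).ne'
  have hcrit := (hasDerivAt_const_add_mul_cos L' M' s x).mul_eq_mul_of_deriv_div_eq_zero
    (hasDerivAt_const_add_mul_cos N' P' t x) hg hx
  have hst' : sin (s + x - (t + x)) ≠ 0 := by rwa [add_sub_add_right_eq_sub]
  have hsin := sin_ne_zero_of_critical hcrit hM.ne' hg hst'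
  refine ⟨hsin, ?_⟩
  rw [← add_sub_add_right_eq_sub s t x]
  exact div_eq_of_critical hcrit hsin (by linarith) hg

/-- For `L' > 0, M' > 0, P' > 0, N' > P'`, `sin(s − t) ≠ 0`, and
`γ₁(x) = (L' + M'·cos(s + x)) / (N' + P'·cos(t + x))`, if `deriv γ₁ x = 0` then
`sin(t + x) ≠ 0` and `γ₁(x) = L'/N' − M'·sin(s − t)/(N'·sin(t + x))`. -/
theorem stmt_3 (L' M' N' P' s t : ℝ) (hL : L' > 0) (hM : M' > 0) (hP : P' > 0)
    (hNP : N' > P') (hst : Real.sin (s - t) ≠ 0)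
    (γ₁ : ℝ → ℝ)
    (hγ : γ₁ = fun x => (L' + M' * Real.cos (s + x)) / (N' + P' * Real.cos (t + x)))
    (x : ℝ) (hx : deriv γ₁ x = 0) :
    Real.sin (t + x) ≠ 0 ∧
      γ₁ x = L' / N' - M' * Real.sin (s - t) / (N' * Real.sin (t + x)) :=
  stmt_3_general L' M' N' P' s t hM hP hNP hst γ₁ hγ x hx
end

section
/- Let L', M', N', P', s, t be real numbers with L' ≥ M' > 0, N' > P' > 0, and sin(s − t) ≠ 0, and define γ₁(x) = (L' + M'·cos(s + x)) / (N' + P'·cos(t + x)) and C' = (L'·P')² + (M'·N')² − 2·L'·M'·N'·P'·cos(s − t). If the derivative of γ₁ at a real point x equals zero, then there exists a sign ε ∈ {−1, +1} such that γ₁(x) = L'/N' − (1/N')·C' / (P'·(L'·P' − M'·N'·cos(s − t)) + ε·N'·√(C' − (M'·P'·sin(s − t))²)). -/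
/-!
At a stationary point of `A / B` one has `A' = γ B'`, where `γ = A / B` is the stationary value.
For `A = L + M cos u` and `B = N + P cos v` this says that the vector `M e^{iu} - γ P e^{iv}` is
the real number `γ N - L`; taking squared moduli eliminates `x` and leaves a quadratic equation in
`γ` with discriminant `C' - (M P sin(s - t))²`. Rationalising its two roots gives the stated form.
-/

open Real

theorem HasDerivAt.eq_div_mul_of_deriv_div_eq_zero {f g : ℝ → ℝ} {f' g' x : ℝ}
    (hf : HasDerivAt f f' x) (hg : HasDerivAt g g' x) (hgx : g x ≠ 0)
    (h : _root_.deriv (fun y => f y / g y) x = 0) : f' = f x / g x * g' := by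
  rw [(hf.fun_div hg hgx).deriv, div_eq_zero_iff, or_iff_left (pow_ne_zero 2 hgx)] at h
  field_simp
  linear_combination h

theorem hasDerivAt_const_add_mul_cos_add (a b s x : ℝ) :
    HasDerivAt (fun y => a + b * cos (s + y)) (-(b * sin (s + x))) x := by
  simpa using (((hasDerivAt_id x).const_add s).cos.const_mul b).const_add a

theorem quadratic_of_mul_cos_eq_of_mul_sin_eq {L M N P γ u v : ℝ}
    (hcos : γ * (N + P * cos v) = L + M * cos u) (hsin : γ * (P * sin v) = M * sin u) :
    (N ^ 2 - P ^ 2) * γ ^ 2 - 2 * (L * N - M * P * cos (u - v)) * γ + (L ^ 2 - M ^ 2) = 0 := by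
  rw [cos_sub]
  linear_combination (γ * N - L + M * cos u - γ * P * cos v) * hcos
    + (M * sin u - γ * P * sin v) * hsin + M ^ 2 * sin_sq_add_cos_sq u
    + γ ^ 2 * P ^ 2 * sin_sq_add_cos_sq v

section RootsOfQuadratic

variable {L M N P C θ : ℝ}

theorem sq_add_sq_sub_mul_cos_eq (hC : C = (L * P) ^ 2 + (M * N) ^ 2 - 2 * L * M * N * P * cos θ) :
    C = (L * P - M * N * cos θ) ^ 2 + (M * N * sin θ) ^ 2 := by
  linear_combination hC - (M * N) ^ 2 * sin_sq_add_cos_sq θ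

theorem eq_sub_div_of_sub_eq_neg_mul {γ ε W : ℝ} (hN : N ≠ 0) (hNP : N ^ 2 - P ^ 2 ≠ 0)
    (hC₀ : C ≠ 0) (hC : C = (L * P - M * N * cos θ) ^ 2 + (M * N * sin θ) ^ 2)
    (hW : W ^ 2 = C - (M * P * sin θ) ^ 2) (hε : ε = -1 ∨ ε = 1)
    (hγ : (N ^ 2 - P ^ 2) * γ - (L * N - M * P * cos θ) = -ε * W) :
    γ = L / N - 1 / N * C / (P * (L * P - M * N * cos θ) + ε * N * W) := by
  have hε2 : ε ^ 2 = 1 := by rcases hε with rfl | rfl <;> norm_num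
  have key : (L - N * γ) * (P * (L * P - M * N * cos θ) + ε * N * W) = C := by
    refine mul_left_cancel₀ hNP ?_
    linear_combination -(N * (P * (L * P - M * N * cos θ) + ε * N * W)) * hγ
      + N ^ 2 * hW + N ^ 2 * W ^ 2 * hε2 + P ^ 2 * hC
  have hden : P * (L * P - M * N * cos θ) + ε * N * W ≠ 0 := by
    rintro h
    exact hC₀ (by rw [← key, h, mul_zero])
  rw [← key, mul_div_assoc, mul_div_cancel_right₀ _ hden]
  field_simp
  ring

theorem exists_sign_eq_of_quadratic {γ : ℝ} (hNP : P < N) (hP : 0 < P) (hM : M ≠ 0)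
    (hθ : sin θ ≠ 0) (hC : C = (L * P) ^ 2 + (M * N) ^ 2 - 2 * L * M * N * P * cos θ)
    (hquad : (N ^ 2 - P ^ 2) * γ ^ 2 - 2 * (L * N - M * P * cos θ) * γ + (L ^ 2 - M ^ 2) = 0) :
    ∃ ε : ℝ, (ε = -1 ∨ ε = 1) ∧
      γ = L / N - 1 / N * C /
        (P * (L * P - M * N * cos θ) + ε * N * √(C - (M * P * sin θ) ^ 2)) := by
  have hN : 0 < N := hP.trans hNP
  have hNP2 : 0 < N ^ 2 - P ^ 2 := by nlinarith
  have hCsq := sq_add_sq_sub_mul_cos_eq hC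
  have hC₀ : C ≠ 0 := by rw [hCsq]; positivity
  have hD : 0 ≤ C - (M * P * sin θ) ^ 2 := by
    have : C - (M * P * sin θ) ^ 2 =
        (L * P - M * N * cos θ) ^ 2 + (M * sin θ) ^ 2 * (N ^ 2 - P ^ 2) := by
      rw [hCsq]; ring
    rw [this]; positivity
  set W := √(C - (M * P * sin θ) ^ 2)
  have hW : W ^ 2 = C - (M * P * sin θ) ^ 2 := sq_sqrt hD
  have hsq : ((N ^ 2 - P ^ 2) * γ - (L * N - M * P * cos θ)) ^ 2 = W ^ 2 := by
    linear_combination (N ^ 2 - P ^ 2) * hquad - hC - hW + (M * P) ^ 2 * sin_sq_add_cos_sq θ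
  obtain h | h := sq_eq_sq_iff_eq_or_eq_neg.1 hsq
  · exact ⟨-1, Or.inl rfl,
      eq_sub_div_of_sub_eq_neg_mul hN.ne' hNP2.ne' hC₀ hCsq hW (Or.inl rfl) (by rw [h]; ring)⟩
  · exact ⟨1, Or.inr rfl,
      eq_sub_div_of_sub_eq_neg_mul hN.ne' hNP2.ne' hC₀ hCsq hW (Or.inr rfl) (by rw [h]; ring)⟩

end RootsOfQuadratic

theorem stmt_5_general (L' M' N' P' s t : ℝ) (hM : M' > 0)
    (hNP : N' > P') (hP : P' > 0) (hst : Real.sin (s - t) ≠ 0)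
    (γ₁ : ℝ → ℝ)
    (hγ : γ₁ = fun x => (L' + M' * Real.cos (s + x)) / (N' + P' * Real.cos (t + x)))
    (C' : ℝ)
    (hC : C' = (L' * P') ^ 2 + (M' * N') ^ 2 -
      2 * L' * M' * N' * P' * Real.cos (s - t))
    (x : ℝ) (hx : deriv γ₁ x = 0) :
    ∃ ε : ℝ, (ε = -1 ∨ ε = 1) ∧
      γ₁ x = L' / N' -
        (1 / N') * C' /
          (P' * (L' * P' - M' * N' * Real.cos (s - t)) +
            ε * N' * Real.sqrt (C' - (M' * P' * Real.sin (s - t)) ^ 2)) := by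
  have hB : 0 < N' + P' * cos (t + x) := by nlinarith [neg_one_le_cos (t + x)]
  have hsin : -(M' * sin (s + x)) = γ₁ x * -(P' * sin (t + x)) := by
    subst hγ
    exact (hasDerivAt_const_add_mul_cos_add L' M' s x).eq_div_mul_of_deriv_div_eq_zero
      (hasDerivAt_const_add_mul_cos_add N' P' t x) hB.ne' hx
  have hcos : γ₁ x * (N' + P' * cos (t + x)) = L' + M' * cos (s + x) := by
    rw [hγ]
    exact div_mul_cancel₀ _ hB.ne'
  have hquad := quadratic_of_mul_cos_eq_of_mul_sin_eq hcos (by linear_combination hsin)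
  rw [show s + x - (t + x) = s - t by ring] at hquad
  exact exists_sign_eq_of_quadratic hNP hP hM.ne' hst hC hquad

/-- Theorem 1 of the paper: for `L' ≥ M' > 0`, `N' > P' > 0`, `sin(s − t) ≠ 0`, and
`γ₁(x) = (L' + M'·cos(s + x)) / (N' + P'·cos(t + x))`, with
`C' = (L'·P')² + (M'·N')² − 2·L'·M'·N'·P'·cos(s − t)`, at every stationary point `x`
of `γ₁` there is a sign `ε ∈ {−1, +1}` such that
`γ₁(x) = L'/N' − (1/N')·C' / (P'·(L'·P' − M'·N'·cos(s − t)) + ε·N'·√(C' − (M'·P'·sin(s − t))²))`. -/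
theorem stmt_5 (L' M' N' P' s t : ℝ) (hLM : L' ≥ M') (hM : M' > 0)
    (hNP : N' > P') (hP : P' > 0) (hst : Real.sin (s - t) ≠ 0)
    (γ₁ : ℝ → ℝ)
    (hγ : γ₁ = fun x => (L' + M' * Real.cos (s + x)) / (N' + P' * Real.cos (t + x)))
    (C' : ℝ)
    (hC : C' = (L' * P') ^ 2 + (M' * N') ^ 2 -
      2 * L' * M' * N' * P' * Real.cos (s - t))
    (x : ℝ) (hx : deriv γ₁ x = 0) :
    ∃ ε : ℝ, (ε = -1 ∨ ε = 1) ∧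
      γ₁ x = L' / N' -
        (1 / N') * C' /
          (P' * (L' * P' - M' * N' * Real.cos (s - t)) +
            ε * N' * Real.sqrt (C' - (M' * P' * Real.sin (s - t)) ^ 2)) :=
  stmt_5_general L' M' N' P' s t hM hNP hP hst γ₁ hγ C' hC x hx
end
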